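/- Let X be a Banach space with an L-projection P on X'' whose range is (the canonical image of) X, let X_s = ker P, and let (x_γ) be a net in the closed unit ball of X converging weak* in X'' to some x_s ∈ X_s with ‖x_s‖ = 1. Then there is a sequence (x_{γ_n}) extracted from the net which spans ℓ¹ asymptotically isometrically. -/

import Mathlib

/-- The old `NormedSpace.Dual` (removed from Mathlib; same as `StrongDual` but with normed-space
instance arguments). -/
abbrev NormedSpace.Dual (𝕜 : Type*) [NontriviallyNormedField 𝕜] (E : Type*) [SeminormedAddCommGroup E]
    [NormedSpace 𝕜 E] : Type _ :=
  E →L[𝕜] 𝕜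

open NormedSpace Filter Topology

/-- A sequence spans `ℓ¹` asymptotically isometrically. -/
def SpansL1Asymptotically {X : Type*} [NormedAddCommGroup X] [NormedSpace ℝ X]
    (x : ℕ → X) : Prop :=
  ∃ δ : ℕ → ℝ, (∀ n, 0 ≤ δ n ∧ δ n < 1) ∧ Tendsto δ atTop (nhds 0) ∧
    ∀ (N : ℕ) (α : ℕ → ℝ),
      (∑ n ∈ Finset.range N, (1 - δ n) * |α n|) ≤ ‖∑ n ∈ Finset.range N, α n • x n‖ ∧
      ‖∑ n ∈ Finset.range N, α n • x n‖ ≤ ∑ n ∈ Finset.range N, |α n|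

/-- A sequence spans `ℓ¹` almost isometrically. -/
def SpansL1AlmostIsometrically {X : Type*} [NormedAddCommGroup X] [NormedSpace ℝ X]
    (x : ℕ → X) : Prop :=
  ∃ δ : ℕ → ℝ, (∀ n, 0 ≤ δ n ∧ δ n < 1) ∧ Tendsto δ atTop (nhds 0) ∧
    ∀ (m M : ℕ) (α : ℕ → ℝ),
      (1 - δ m) * (∑ n ∈ Finset.Icc m M, |α n|) ≤ ‖∑ n ∈ Finset.Icc m M, α n • x n‖ ∧
      ‖∑ n ∈ Finset.Icc m M, α n • x n‖ ≤ ∑ n ∈ Finset.Icc m M, |α n|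

/-- A sequence spans `c₀` asymptotically isometrically. -/
def SpansC0Asymptotically {X : Type*} [NormedAddCommGroup X] [NormedSpace ℝ X]
    (z : ℕ → X) : Prop :=
  ∃ δ : ℕ → ℝ, (∀ n, 0 ≤ δ n ∧ δ n < 1) ∧ Tendsto δ atTop (nhds 0) ∧
    ∀ (N : ℕ) (hN : N ≠ 0) (α : ℕ → ℝ),
      ((Finset.range N).sup' (Finset.nonempty_range_iff.mpr hN)
          (fun n => (1 - δ n) * |α n|)) ≤ ‖∑ n ∈ Finset.range N, α n • z n‖ ∧
      ‖∑ n ∈ Finset.range N, α n • z n‖ ≤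
        (Finset.range N).sup' (Finset.nonempty_range_iff.mpr hN)
          (fun n => (1 + δ n) * |α n|)

/-- `P` is an L-projection: an idempotent bounded operator with
`‖ξ‖ = ‖Pξ‖ + ‖ξ - Pξ‖` for all `ξ`. -/
def IsLProjection {E : Type*} [NormedAddCommGroup E] [NormedSpace ℝ E]
    (P : E →L[ℝ] E) : Prop :=
  (∀ ξ, P (P ξ) = P ξ) ∧ ∀ ξ, ‖ξ‖ = ‖P ξ‖ + ‖ξ - P ξ‖

/-- `X` is L-embedded: the canonical image of `X` in its bidual is the range of an
L-projection. -/
def IsLEmbedded (X : Type*) [NormedAddCommGroup X] [NormedSpace ℝ X] : Prop :=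
  ∃ P : Dual ℝ (Dual ℝ X) →L[ℝ] Dual ℝ (Dual ℝ X),
    (∀ ξ, P (P ξ) = P ξ) ∧ (∀ ξ, ‖ξ‖ = ‖P ξ‖ + ‖ξ - P ξ‖) ∧
      Set.range P = Set.range (inclusionInDoubleDual ℝ X)

/-- `X` is M-embedded: the annihilator of `X` in `X'''` is the range of an
L-projection on `X'''`. -/
def IsMEmbedded (X : Type*) [NormedAddCommGroup X] [NormedSpace ℝ X] : Prop :=
  ∃ P : Dual ℝ (Dual ℝ (Dual ℝ X)) →L[ℝ] Dual ℝ (Dual ℝ (Dual ℝ X)),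
    (∀ φ, P (P φ) = P φ) ∧ (∀ φ, ‖φ‖ = ‖P φ‖ + ‖φ - P φ‖) ∧
      Set.range P = {φ | ∀ x : X, φ (inclusionInDoubleDual ℝ X x) = 0}

/-- `X` fails the fixed point property: there are a nonempty closed bounded convex set and
a contractive self-map without fixed point. -/
def FailsFPP (X : Type*) [NormedAddCommGroup X] [NormedSpace ℝ X] : Prop :=
  ∃ C : Set X, C.Nonempty ∧ IsClosed C ∧ Bornology.IsBounded C ∧ Convex ℝ C ∧
    ∃ f : X → X, Set.MapsTo f C C ∧
      (∀ x ∈ C, ∀ y ∈ C, x ≠ y → ‖f x - f y‖ < ‖x - y‖) ∧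
      ∀ x ∈ C, f x ≠ x

/-!
By the L-decomposition, `‖y + t • xs‖ = ‖y‖ + |t|` for `y ∈ X` and real `t`. By Helly's lemma,
any functional of norm `≤ 1` can therefore be modified, almost without changing its values on
finitely many given vectors of `X`, into one of norm `≤ 1` taking any prescribed value in
`[-1, 1]` at `xs`. Choose `x_{γ_n}` inductively so that every sign pattern on
`x_{γ_0}, …, x_{γ_n}` is almost attained by a functional of norm `≤ 1`: modify the functionals
for the patterns on the previous vectors so that they take the value `±1` at `xs`, then go far
enough along the net that all of them nearly take that same value at `x_{γ_n}`. With summable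
errors these functionals give the lower `ℓ¹` estimate.
-/

open Finset

theorem IsLProjection.norm_add_of_mem_range {E : Type*} [NormedAddCommGroup E]
    [NormedSpace ℝ E] {P : E →L[ℝ] E} (hP : IsLProjection P) {ξ η : E}
    (hξ : ξ ∈ Set.range P) (hη : P η = 0) : ‖ξ + η‖ = ‖ξ‖ + ‖η‖ := by
  obtain ⟨ζ, rfl⟩ := hξ
  have hPζη : P (P ζ + η) = P ζ := by rw [map_add, hP.1, hη, add_zero]
  rw [hP.2 (P ζ + η), hPζη, add_sub_cancel_left]

/-- Approximate form of Helly's lemma. -/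
theorem exists_norm_le_one_forall_abs_sub_lt {E : Type*} [NormedAddCommGroup E]
    [NormedSpace ℝ E] {ι : Type*} [Fintype ι] (ψ : ι → Dual ℝ E) (p : ι → ℝ)
    (hp : ∀ a : ι → ℝ, ∑ i, a i * p i ≤ ‖∑ i, a i • ψ i‖) {ε : ℝ} (hε : 0 < ε) :
    ∃ e : E, ‖e‖ ≤ 1 ∧ ∀ i, |ψ i e - p i| < ε := by
  classical
  let Φ : E →L[ℝ] ι → ℝ := ContinuousLinearMap.pi ψ
  have hK : Convex ℝ (Φ '' Metric.closedBall 0 1) :=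
    (convex_closedBall 0 1).linear_image Φ.toLinearMap
  have hp_mem : p ∈ closure (Φ '' Metric.closedBall 0 1) := by
    by_contra hp_not
    obtain ⟨φ, u, hφK, hφp⟩ :=
      geometric_hahn_banach_closed_point hK.closure isClosed_closure hp_not
    have hφ_lt : ∀ e, ‖e‖ ≤ 1 → φ (Φ e) < u := fun e he =>
      hφK _ (subset_closure ⟨e, mem_closedBall_zero_iff.2 he, rfl⟩)
    set a : ι → ℝ := fun i => φ fun j => if i = j then 1 else 0
    have hφ_apply : ∀ w, φ w = ∑ i, a i * w i := fun w => by
      rw [← φ.coe_coe, LinearMap.pi_apply_eq_sum_univ]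
      exact Finset.sum_congr rfl fun i _ => mul_comm _ _
    have hu : 0 < u := by simpa using hφ_lt 0 (by simp)
    have hnorm : ‖∑ i, a i • ψ i‖ ≤ u := by
      refine ContinuousLinearMap.opNorm_le_of_unit_norm hu.le fun e he => ?_
      have hval : ∀ e, (∑ i, a i • ψ i) e = φ (Φ e) := fun e => by
        simp [hφ_apply, Φ]
      have hneg := hφ_lt (-e) (by rw [norm_neg, he])
      rw [map_neg, map_neg] at hneg
      rw [Real.norm_eq_abs, abs_le, hval]
      exact ⟨by linarith, (hφ_lt e he.le).le⟩
    have hpa := hp a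
    rw [← hφ_apply] at hpa
    linarith
  obtain ⟨_, ⟨e, he, rfl⟩, hdist⟩ := Metric.mem_closure_iff.1 hp_mem ε hε
  refine ⟨e, mem_closedBall_zero_iff.1 he, fun i => ?_⟩
  rw [← Real.dist_eq, dist_comm]
  exact (dist_le_pi_dist p (Φ e) i).trans_lt hdist

theorem norm_sum_smul_le_sum_abs {X : Type*} [NormedAddCommGroup X] [NormedSpace ℝ X]
    {ι : Type*} (s : Finset ι) (α : ι → ℝ) {y : ι → X} (hy : ∀ i, ‖y i‖ ≤ 1) :
    ‖∑ i ∈ s, α i • y i‖ ≤ ∑ i ∈ s, |α i| :=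
  (norm_sum_le _ _).trans <| sum_le_sum fun i _ => by
    rw [norm_smul, Real.norm_eq_abs]
    exact mul_le_of_le_one_right (abs_nonneg _) (hy i)

theorem exists_seq_forall_of_step {Γ : Type*} (Q : ℕ → (ℕ → Γ) → Prop)
    (hQ : ∀ n v w, (∀ k < n, v k = w k) → Q n v → Q n w) (v₀ : ℕ → Γ) (h₀ : Q 0 v₀)
    (hstep : ∀ n v, Q n v → ∃ γ, Q (n + 1) (Function.update v n γ)) :
    ∃ v : ℕ → Γ, ∀ n, Q n v := by
  choose next hnext using hstep
  let T : ∀ n, {v // Q n v} := fun n =>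
    Nat.rec ⟨v₀, h₀⟩ (fun n v => ⟨Function.update v.1 n (next n v.1 v.2), hnext _ _ _⟩) n
  refine ⟨fun n => (T (n + 1)).1 n, fun n => hQ n _ _ ?_ (T n).2⟩
  induction n with
  | zero => simp
  | succ n ih =>
    intro k hk
    rcases Nat.lt_succ_iff_lt_or_eq.1 hk with hk | rfl
    · exact (Function.update_of_ne hk.ne _ _).trans (ih k hk)
    · rfl

section SignNorming

variable {X : Type*} [NormedAddCommGroup X] [NormedSpace ℝ X]

/-- A sign pattern is encoded by the set `S` of indices carrying the sign `+1`. -/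
def SignNorming (y : ℕ → X) (c : ℕ → ℝ) (n : ℕ) : Prop :=
  ∀ S : Finset ℕ, ∃ g : Dual ℝ X, ‖g‖ ≤ 1 ∧
    ∀ k < n, c k ≤ (if k ∈ S then 1 else -1) * g (y k)

theorem signNorming_zero (y : ℕ → X) (c : ℕ → ℝ) : SignNorming y c 0 :=
  fun _ => ⟨0, by simp, by simp⟩

theorem SignNorming.congr {y y' : ℕ → X} {c : ℕ → ℝ} {n : ℕ} (h : SignNorming y c n)
    (hy : ∀ k < n, y k = y' k) : SignNorming y' c n := fun S => by
  obtain ⟨g, hg, hgy⟩ := h S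
  exact ⟨g, hg, fun k hk => hy k hk ▸ hgy k hk⟩

theorem SignNorming.sum_mul_abs_le_norm {y : ℕ → X} {c : ℕ → ℝ} {N : ℕ}
    (h : SignNorming y c N) (α : ℕ → ℝ) :
    ∑ k ∈ range N, c k * |α k| ≤ ‖∑ k ∈ range N, α k • y k‖ := by
  classical
  obtain ⟨g, hg, hgy⟩ := h ((range N).filter fun k => 0 ≤ α k)
  have hsign : ∀ k ∈ range N,
      (if k ∈ (range N).filter fun k => 0 ≤ α k then (1 : ℝ) else -1) * |α k| = α k := by
    intro k hk
    by_cases hα : 0 ≤ α k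
    · simp [hk, hα, abs_of_nonneg hα]
    · simp [hα, abs_of_neg (not_le.1 hα)]
  calc ∑ k ∈ range N, c k * |α k|
      ≤ ∑ k ∈ range N, α k * g (y k) := sum_le_sum fun k hk =>
        (mul_le_mul_of_nonneg_right (hgy k (mem_range.1 hk)) (abs_nonneg _)).trans_eq <| by
          rw [mul_right_comm, hsign k hk]
    _ = g (∑ k ∈ range N, α k • y k) := by simp [map_sum]
    _ ≤ ‖∑ k ∈ range N, α k • y k‖ := (le_abs_self _).trans <| by
        simpa using g.le_of_opNorm_le hg (∑ k ∈ range N, α k • y k)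

variable {xs : Dual ℝ (Dual ℝ X)}

theorem norm_inclusionInDoubleDual_add_smul {P : Dual ℝ (Dual ℝ X) →L[ℝ] Dual ℝ (Dual ℝ X)}
    (hP : IsLProjection (E := Dual ℝ (Dual ℝ X)) P)
    (hrange : Set.range P = Set.range (inclusionInDoubleDual ℝ X))
    (hxs : P xs = 0) (hxs1 : ‖xs‖ = 1) (y : X) (t : ℝ) :
    ‖inclusionInDoubleDual ℝ X y + t • xs‖ = ‖y‖ + |t| := by
  have hxs' : P (t • xs) = 0 := by rw [map_smul, hxs, smul_zero]
  rw [hP.norm_add_of_mem_range (hrange ▸ Set.mem_range_self y) hxs',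
    norm_smul, hxs1, mul_one, Real.norm_eq_abs]
  exact congrArg (· + |t|) ((inclusionInDoubleDualLi ℝ).norm_map y)

theorem exists_forall_abs_sub_lt_of_norm_add_smul
    (hL : ∀ (y : X) (t : ℝ), ‖y‖ + |t| ≤ ‖inclusionInDoubleDual ℝ X y + t • xs‖)
    {ι : Type*} [Fintype ι] (v : ι → X) {f : Dual ℝ X} (hf : ‖f‖ ≤ 1) {t : ℝ} (ht : |t| ≤ 1)
    {ε : ℝ} (hε : 0 < ε) :
    ∃ g : Dual ℝ X, ‖g‖ ≤ 1 ∧ (∀ i, |g (v i) - f (v i)| < ε) ∧ |xs g - t| < ε := by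
  have hcompat : ∀ a : Option ι → ℝ, ∑ o, a o * o.elim t (fun i => f (v i)) ≤
      ‖∑ o, a o • o.elim xs (fun i => inclusionInDoubleDual ℝ X (v i))‖ := by
    intro a
    have hf_le : f (∑ i, a (some i) • v i) ≤ ‖∑ i, a (some i) • v i‖ :=
      (le_abs_self _).trans <| by simpa using f.le_of_opNorm_le hf (∑ i, a (some i) • v i)
    have ht_le : a none * t ≤ |a none| :=
      (le_abs_self _).trans <| by
        rw [abs_mul]; exact mul_le_of_le_one_right (abs_nonneg _) ht
    have hL' := hL (∑ i, a (some i) • v i) (a none)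
    simp only [Fintype.sum_option, Option.elim, map_sum, map_smul, smul_eq_mul] at hL' hf_le ⊢
    rw [add_comm (a none • xs)]
    linarith
  obtain ⟨g, hg, hgψ⟩ := exists_norm_le_one_forall_abs_sub_lt _ _ hcompat hε
  exact ⟨g, hg, fun i => hgψ (some i), hgψ none⟩

variable {Γ : Type*} {l : Filter Γ} [l.NeBot] {x : Γ → X}

theorem SignNorming.exists_update
    (hL : ∀ (y : X) (t : ℝ), ‖y‖ + |t| ≤ ‖inclusionInDoubleDual ℝ X y + t • xs‖)
    (hconv : ∀ f : Dual ℝ X, Tendsto (fun γ => f (x γ)) l (𝓝 (xs f)))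
    {y : ℕ → X} {c c' : ℕ → ℝ} {n : ℕ} (h : SignNorming y c n) {ε : ℝ} (hε : 0 < ε)
    (hc : ∀ k < n, c' k ≤ c k - ε) (hcn : c' n ≤ 1 - 2 * ε) :
    ∃ γ, SignNorming (Function.update y n (x γ)) c' (n + 1) := by
  classical
  have hperturb : ∀ S : Finset ℕ, ∃ g : Dual ℝ X, ‖g‖ ≤ 1 ∧
      (∀ k < n, c k - ε ≤ (if k ∈ S then 1 else -1) * g (y k)) ∧
      |xs g - if n ∈ S then 1 else -1| < ε := by
    intro S
    obtain ⟨f, hf, hfy⟩ := h S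
    obtain ⟨g, hg, hgy, hgxs⟩ := exists_forall_abs_sub_lt_of_norm_add_smul hL
      (fun k : Fin n => y k) hf (t := if n ∈ S then 1 else -1) (by split_ifs <;> simp) hε
    refine ⟨g, hg, fun k hk => ?_, hgxs⟩
    have hgf := abs_lt.1 (hgy ⟨k, hk⟩)
    have hfk := hfy k hk
    split_ifs at hfk ⊢ <;> linarith
  choose g hg hgy hgxs using hperturb
  -- Only the finitely many patterns on the indices `≤ n` matter, so one `γ` serves them all.
  have hnear : ∀ᶠ γ in l, ∀ S ∈ (range (n + 1)).powerset, |g S (x γ) - xs (g S)| < ε :=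
    (eventually_all_finset _).2 fun S _ => by
      simpa [Real.dist_eq] using Metric.tendsto_nhds.1 (hconv (g S)) ε hε
  obtain ⟨γ, hγ⟩ := hnear.exists
  refine ⟨γ, fun S => ⟨g (S ∩ range (n + 1)), hg _, fun k hk => ?_⟩⟩
  have hS : k ∈ S ∩ range (n + 1) ↔ k ∈ S := by simp [hk]
  rcases Nat.lt_succ_iff_lt_or_eq.1 hk with hk | rfl
  · have hgk := hgy (S ∩ range (n + 1)) k hk
    rw [if_congr hS rfl rfl] at hgk
    rw [Function.update_of_ne hk.ne]
    linarith [hc k hk]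
  · have hxγ := abs_lt.1 (hγ (S ∩ range (k + 1)) (mem_powerset.2 inter_subset_right))
    have hxs := hgxs (S ∩ range (k + 1))
    rw [if_congr hS rfl rfl] at hxs
    have hxs' := abs_lt.1 hxs
    rw [Function.update_self]
    split_ifs at hxs' ⊢ <;> linarith

end SignNorming

theorem stmt5_general {X : Type*} [NormedAddCommGroup X] [NormedSpace ℝ X] {Γ : Type*} [Nonempty Γ] [SemilatticeSup Γ]
    (P : Dual ℝ (Dual ℝ X) →L[ℝ] Dual ℝ (Dual ℝ X))
    (hP : (∀ ξ, P (P ξ) = P ξ) ∧ ∀ ξ, ‖ξ‖ = ‖P ξ‖ + ‖ξ - P ξ‖)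
    (hrange : Set.range P = Set.range (inclusionInDoubleDual ℝ X))
    (x : Γ → X) (hx : ∀ γ, ‖x γ‖ ≤ 1)
    (xs : Dual ℝ (Dual ℝ X)) (hxs : P xs = 0) (hxs1 : ‖xs‖ = 1)
    (hconv : ∀ f : Dual ℝ X,
      Tendsto (fun γ => inclusionInDoubleDual ℝ X (x γ) f) atTop (nhds (xs f))) :
    ∃ γ : ℕ → Γ, SpansL1Asymptotically (fun n => x (γ n)) := by
  have hL : ∀ (y : X) (t : ℝ), ‖y‖ + |t| ≤ ‖inclusionInDoubleDual ℝ X y + t • xs‖ :=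
    fun y t => (norm_inclusionInDoubleDual_add_smul hP hrange hxs hxs1 y t).ge
  -- Stage `n` costs `ε n` at each earlier index and `2 * ε n` at index `n`; since
  -- `∑_{j ≥ n} ε j = 2 * ε n`, the bound `1 - 3 * ε k + 2 * ε n` survives all later stages.
  let ε : ℕ → ℝ := fun n => (1 / 2) ^ (n + 2)
  have hε_succ : ∀ n, ε n = 2 * ε (n + 1) := fun n => by simp only [ε]; ring
  obtain ⟨γ, hγ⟩ := exists_seq_forall_of_step
    (fun n v => SignNorming (x ∘ v) (fun k => 1 - 3 * ε k + 2 * ε n) n)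
    (fun n _ _ hvw h => h.congr fun k hk => congrArg x (hvw k hk))
    (fun _ => Classical.arbitrary Γ) (signNorming_zero _ _)
    (fun n v h => by
      simpa only [Function.comp_update] using h.exists_update hL hconv (ε := ε n)
        (by positivity) (fun k _ => by linarith [hε_succ n]) (by linarith [hε_succ n]))
  refine ⟨γ, fun n => 3 * ε n, fun n => ⟨by positivity, ?_⟩, ?_, fun N α => ⟨?_, ?_⟩⟩
  · have hpow := pow_le_one₀ (n := n) (by norm_num : (0 : ℝ) ≤ 1 / 2) (by norm_num)
    simp only [ε, pow_add]
    linarith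
  · simpa using ((tendsto_pow_atTop_nhds_zero_of_lt_one (by norm_num) (by norm_num)).comp
      (tendsto_add_atTop_nat 2)).const_mul (3 : ℝ)
  · refine (sum_le_sum fun k _ => ?_).trans ((hγ N).sum_mul_abs_le_norm α)
    have hεN : 0 < ε N := by positivity
    exact mul_le_mul_of_nonneg_right (by linarith) (abs_nonneg _)
  · exact norm_sum_smul_le_sum_abs _ α fun k => hx _

theorem stmt5 {X : Type*} [NormedAddCommGroup X] [NormedSpace ℝ X] [CompleteSpace X] {Γ : Type*} [Nonempty Γ] [SemilatticeSup Γ]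
    (P : Dual ℝ (Dual ℝ X) →L[ℝ] Dual ℝ (Dual ℝ X))
    (hP : (∀ ξ, P (P ξ) = P ξ) ∧ ∀ ξ, ‖ξ‖ = ‖P ξ‖ + ‖ξ - P ξ‖)
    (hrange : Set.range P = Set.range (inclusionInDoubleDual ℝ X))
    (x : Γ → X) (hx : ∀ γ, ‖x γ‖ ≤ 1)
    (xs : Dual ℝ (Dual ℝ X)) (hxs : P xs = 0) (hxs1 : ‖xs‖ = 1)
    (hconv : ∀ f : Dual ℝ X,
      Tendsto (fun γ => inclusionInDoubleDual ℝ X (x γ) f) atTop (nhds (xs f))) :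
    ∃ γ : ℕ → Γ, SpansL1Asymptotically (fun n => x (γ n)) :=
  stmt5_general P hP hrange x hx xs hxs hxs1 hconv
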